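/- Let F be a free profinite group on a basis containing two distinct elements x and y, and let m, n be positive integers. Then the centralizer of x^m in F is the closed procyclic subgroup topologically generated by x, and consequently the centralizer of x^m and the centralizer of y^n intersect trivially. -/

import Mathlib

/-- `F` is a free profinite group on the basis `B`: every map from `B` to a profinite
group extends uniquely to a continuous homomorphism. -/
def IsFreeProfiniteOn (F : Type) [Group F] [TopologicalSpace F] [IsTopologicalGroup F]
    [CompactSpace F] [T2Space F] [TotallyDisconnectedSpace F] (B : Set F) : Prop :=
  ∀ (H : Type) [Group H] [TopologicalSpace H] [IsTopologicalGroup H]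
    [CompactSpace H] [T2Space H] [TotallyDisconnectedSpace H] (f : B → H),
      ∃! g : F →* H, Continuous g ∧ ∀ b : B, g b = f b

section Helpers

/-- The translation action of `G` on `Multiplicative (G → C)`. -/
def shiftAut (G : Type) [Group G] (C : Type) [AddCommGroup C] :
    G →* MulAut (Multiplicative (G → C)) where
  toFun s :=
    { toFun := fun f => Multiplicative.ofAdd fun t => Multiplicative.toAdd f (s⁻¹ * t)
      invFun := fun f => Multiplicative.ofAdd fun t => Multiplicative.toAdd f (s * t)
      left_inv := fun f => by
        show Multiplicative.ofAdd (fun t => Multiplicative.toAdd f (s⁻¹ * (s * t))) = f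
        simp
      right_inv := fun f => by
        show Multiplicative.ofAdd (fun t => Multiplicative.toAdd f (s * (s⁻¹ * t))) = f
        simp
      map_mul' := fun a b => rfl }
  map_one' := by
    ext f t
    show Multiplicative.toAdd f ((1:G)⁻¹ * t) = Multiplicative.toAdd f t
    simp
  map_mul' := fun a b => by
    ext f t
    show Multiplicative.toAdd f ((a*b)⁻¹ * t) =
      Multiplicative.toAdd f (b⁻¹ * (a⁻¹ * t))
    simp [mul_assoc]

variable {F : Type} [Group F] [TopologicalSpace F] [IsTopologicalGroup F]
    [CompactSpace F] [T2Space F] [TotallyDisconnectedSpace F] {B : Set F}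

lemma extendAux (hF : IsFreeProfiniteOn F B) (H : Type) [Group H] [TopologicalSpace H]
    [DiscreteTopology H] [Finite H] (f : B → H) :
    ∃! g : F →* H, Continuous g ∧ ∀ b : B, g b = f b := by
  haveI : ContinuousMul H := ⟨continuous_of_discreteTopology⟩
  haveI : ContinuousInv H := ⟨continuous_of_discreteTopology⟩
  haveI : IsTopologicalGroup H := { }
  exact hF H f

lemma exists_onn {U : Set F} (hU : IsOpen U) (h1 : (1:F) ∈ U) :
    ∃ N : OpenNormalSubgroup F, (N : Set F) ⊆ U := by
  obtain ⟨V, hV, h1V, hVU⟩ := compact_exists_isClopen_in_isOpen hU h1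
  obtain ⟨N, hN⟩ := IsTopologicalGroup.exist_openNormalSubgroup_sub_clopen_nhds_of_one hV h1V
  exact ⟨N, hN.trans hVU⟩

end Helpers

section Main

variable {F : Type} [Group F] [TopologicalSpace F] [IsTopologicalGroup F]
    [CompactSpace F] [T2Space F] [TotallyDisconnectedSpace F] {B : Set F}

lemma centralizer_eq_closure (hF : IsFreeProfiniteOn F B) {x : F} (hx : x ∈ B)
    {m : ℕ} (hm : 0 < m) :
    Subgroup.centralizer {x ^ m} = (Subgroup.zpowers x).topologicalClosure := by
  classical
  set A := (Subgroup.zpowers x).topologicalClosure with hA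
  have hAclosed : IsClosed (A : Set F) := Subgroup.isClosed_topologicalClosure _
  have hxkA : ∀ k : ℤ, x ^ k ∈ A := fun k => Subgroup.le_topologicalClosure _ ⟨k, rfl⟩
  refine le_antisymm ?_ ?_
  · intro g hg
    by_contra hgA
    have hU : IsOpen {u : F | g * u ∉ (A : Set F)} := by
      have h1 : {u : F | g * u ∉ (A : Set F)} = (fun u => g * u) ⁻¹' (A : Set F)ᶜ := rfl
      rw [h1]
      exact (hAclosed.isOpen_compl).preimage (continuous_const.mul continuous_id)
    obtain ⟨N, hN⟩ := exists_onn hU (by simpa using hgA)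
    set G := F ⧸ N.toSubgroup with hG
    haveI : Finite G := Subgroup.quotient_finite_of_isOpen _ N.isOpen
    haveI : DiscreteTopology G := QuotientGroup.discreteTopology N.isOpen
    set π : F →* G := QuotientGroup.mk' N.toSubgroup with hπdef
    have hπcont : Continuous π := continuous_quot_mk
    set x' : G := π x with hx'
    have hh : π g ∉ Subgroup.zpowers x' := by
      rintro ⟨k, hk⟩
      have hk' : x' ^ k = π g := hk
      have hu : g⁻¹ * x ^ k ∈ N.toSubgroup := by
        rw [← QuotientGroup.ker_mk' N.toSubgroup, MonoidHom.mem_ker]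
        show π (g⁻¹ * x ^ k) = 1
        rw [map_mul, map_inv, map_zpow, ← hx', hk', inv_mul_cancel]
      have h2 := hN hu
      simp only [Set.mem_setOf_eq, mul_inv_cancel_left] at h2
      exact h2 (hxkA k)
    obtain ⟨p, hple, hp⟩ := Nat.exists_infinite_primes (m + 1)
    haveI : Fact p.Prime := ⟨hp⟩
    set φ := shiftAut G (ZMod p) with hφ
    letI : TopologicalSpace (Multiplicative (G → ZMod p) ⋊[φ] G) := ⊥
    haveI : DiscreteTopology (Multiplicative (G → ZMod p) ⋊[φ] G) := ⟨rfl⟩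
    haveI : Finite (Multiplicative (G → ZMod p) ⋊[φ] G) :=
      Finite.of_injective (fun w => (w.left, w.right))
        (fun a b hab => SemidirectProduct.ext (congrArg Prod.fst hab) (congrArg Prod.snd hab))
    set e1 : Multiplicative (G → ZMod p) :=
      Multiplicative.ofAdd (fun t => if t = (1:G) then (1:ZMod p) else 0) with he1
    obtain ⟨ψ, ⟨ψcont, ψspec⟩, -⟩ := extendAux hF (Multiplicative (G → ZMod p) ⋊[φ] G)
      (fun b => ⟨if (b : F) = x then e1 else 1, π b⟩)
    have hψx : ψ x = ⟨e1, x'⟩ := by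
      have h3 := ψspec ⟨x, hx⟩
      simpa using h3
    have hright : ∀ w : F, (ψ w).right = π w := by
      obtain ⟨ρ, -, hρu⟩ := extendAux hF G (fun b => π b)
      have h1 : SemidirectProduct.rightHom.comp ψ = ρ := by
        refine hρu _ ⟨?_, ?_⟩
        · show Continuous (fun w => SemidirectProduct.rightHom (ψ w))
          exact continuous_of_discreteTopology.comp ψcont
        · intro b
          show SemidirectProduct.rightHom (ψ b) = π b
          rw [ψspec b]
          rfl
      have h2 : π = ρ := hρu _ ⟨hπcont, fun b => rfl⟩
      intro w
      exact congrArg (fun q => q w) (h1.trans h2.symm)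
    have hpow : ∀ k : ℕ, (ψ x) ^ k
        = ⟨Multiplicative.ofAdd (fun t => ∑ i ∈ Finset.range k,
            if t = x' ^ i then (1:ZMod p) else 0), x' ^ k⟩ := by
      intro k
      induction k with
      | zero =>
        refine SemidirectProduct.ext ?_ (by simp)
        show (1 : Multiplicative (G → ZMod p)) = _
        simp only [Finset.range_zero, Finset.sum_empty]
        exact ofAdd_zero.symm
      | succ k ih =>
        rw [pow_succ, ih, hψx, SemidirectProduct.mul_def]
        refine SemidirectProduct.ext ?_ (by rw [← pow_succ])
        apply Multiplicative.toAdd.injective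
        funext t
        show (∑ i ∈ Finset.range k, if t = x' ^ i then (1:ZMod p) else 0)
            + (if (x' ^ k)⁻¹ * t = 1 then (1:ZMod p) else 0)
          = ∑ i ∈ Finset.range (k+1), if t = x' ^ i then (1:ZMod p) else 0
        rw [Finset.sum_range_succ]
        have h8 : (if (x' ^ k)⁻¹ * t = 1 then (1:ZMod p) else 0)
            = if t = x' ^ k then (1:ZMod p) else 0 := by
          by_cases hcase : t = x' ^ k
          · rw [if_pos hcase, if_pos (by rw [hcase, inv_mul_cancel])]
          · rw [if_neg hcase, if_neg fun h9 => hcase (inv_mul_eq_one.mp h9).symm]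
        rw [h8]
    have hc : x ^ m * g = g * x ^ m := hg (x ^ m) rfl
    have hcomm : ψ (x ^ m) * ψ g = ψ g * ψ (x ^ m) := by
      rw [← map_mul, ← map_mul, hc]
    set βf : G → ZMod p := fun t => ∑ i ∈ Finset.range m,
      if t = x' ^ i then (1:ZMod p) else 0 with hβf
    have hxm : ψ (x ^ m) = ⟨Multiplicative.ofAdd βf, x' ^ m⟩ := by
      rw [map_pow, hpow m]
    set α : G → ZMod p := fun t => Multiplicative.toAdd (ψ g).left t with hα
    have E : ∀ t : G, βf t + α ((x' ^ m)⁻¹ * t) = α t + βf ((π g)⁻¹ * t) := by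
      intro t
      have hL := congrArg SemidirectProduct.left hcomm
      rw [hxm] at hL
      simp only [SemidirectProduct.mul_left] at hL
      rw [hright g] at hL
      exact congrFun (congrArg Multiplicative.toAdd hL) t
    set Z := Subgroup.zpowers (x' ^ m) with hZ
    haveI : Fintype Z := Fintype.ofFinite _
    have S2 : ∑ u : Z, α ((x' ^ m)⁻¹ * (u : G)) = ∑ u : Z, α u := by
      have h4 := Equiv.sum_comp (Equiv.mulLeft ((⟨x' ^ m, Subgroup.mem_zpowers _⟩ : Z)⁻¹))
        (fun u : Z => α u)
      simpa using h4
    have S3 : ∑ u : Z, βf ((π g)⁻¹ * (u : G)) = 0 := by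
      refine Finset.sum_eq_zero fun u _ => Finset.sum_eq_zero fun i _ => ?_
      rw [if_neg]
      intro hEq
      apply hh
      have hu : (u : G) ∈ Subgroup.zpowers x' :=
        (Subgroup.zpowers_le.mpr (Subgroup.pow_mem _ (Subgroup.mem_zpowers x') m)) u.2
      have h5 : π g = (u : G) * (x' ^ i)⁻¹ := by
        rw [← hEq]; group
      rw [h5]
      exact Subgroup.mul_mem _ hu
        (Subgroup.inv_mem _ (Subgroup.pow_mem _ (Subgroup.mem_zpowers x') i))
    have S4 : ∑ u : Z, βf (u : G) ≠ 0 := by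
      have hswap : ∑ u : Z, βf (u : G)
          = ∑ i ∈ Finset.range m, ∑ u : Z,
              (if (u : G) = x' ^ i then (1:ZMod p) else 0) := by
        simp only [hβf]
        rw [Finset.sum_comm]
      have hinner : ∀ c : G, (∑ u : Z, if (u : G) = c then (1:ZMod p) else 0)
          = if c ∈ Z then (1:ZMod p) else 0 := by
        intro c
        by_cases hcz : c ∈ Z
        · rw [if_pos hcz, Finset.sum_eq_single (⟨c, hcz⟩ : Z)]
          · rw [if_pos rfl]
          · intro u _ hu; exact if_neg fun hEq => hu (Subtype.ext hEq)
          · intro habs; exact absurd (Finset.mem_univ _) habs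
        · rw [if_neg hcz]
          exact Finset.sum_eq_zero fun u _ => if_neg fun hEq => hcz (by rw [← hEq]; exact u.2)
      rw [hswap]
      simp_rw [hinner]
      rw [Finset.sum_boole]
      set K := ((Finset.range m).filter fun i => x' ^ i ∈ Z).card with hK
      have hK1 : 0 < K := Finset.card_pos.mpr
        ⟨0, Finset.mem_filter.mpr ⟨Finset.mem_range.mpr hm, by simpa using Subgroup.one_mem Z⟩⟩
      have hKm : K ≤ m := le_trans (Finset.card_filter_le _ _) (by simp)
      intro h0
      have hdvd := (ZMod.natCast_eq_zero_iff K p).mp h0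
      have := Nat.le_of_dvd hK1 hdvd
      omega
    have S1 : ∑ u : Z, βf (u : G) + ∑ u : Z, α ((x' ^ m)⁻¹ * (u : G)) =
        ∑ u : Z, α (u : G) + ∑ u : Z, βf ((π g)⁻¹ * (u : G)) := by
      rw [← Finset.sum_add_distrib, ← Finset.sum_add_distrib]
      exact Finset.sum_congr rfl fun u _ => E u
    rw [S2, S3, add_zero] at S1
    exact S4 (add_eq_right.mp S1)
  · refine Subgroup.topologicalClosure_minimal _ ?_ ?_
    · rintro a ⟨k, rfl⟩
      rw [Subgroup.mem_centralizer_iff]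
      rintro h' hh'
      rw [Set.mem_singleton_iff] at hh'
      subst hh'
      exact (((Commute.refl x).pow_left m).zpow_right k).eq
    · have h6 : ((Subgroup.centralizer {x ^ m} : Subgroup F) : Set F)
          = {g | x ^ m * g = g * x ^ m} := by
        ext g; simp [Subgroup.mem_centralizer_iff]
      rw [h6]
      exact isClosed_eq (continuous_const.mul continuous_id) (continuous_id.mul continuous_const)

end Main

section Main2

variable {F : Type} [Group F] [TopologicalSpace F] [IsTopologicalGroup F]
    [CompactSpace F] [T2Space F] [TotallyDisconnectedSpace F] {B : Set F}

lemma closure_inter (hF : IsFreeProfiniteOn F B) {x y : F} (hx : x ∈ B) (hy : y ∈ B)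
    (hxy : x ≠ y) :
    (Subgroup.zpowers x).topologicalClosure ⊓ (Subgroup.zpowers y).topologicalClosure = ⊥ := by
  classical
  rw [eq_bot_iff]
  rintro g ⟨hgx, hgy⟩
  simp only [Subgroup.mem_bot]
  by_contra hg1
  have hU : IsOpen ({g}ᶜ : Set F) := isClosed_singleton.isOpen_compl
  obtain ⟨N, hN⟩ := exists_onn hU (by simpa using fun h => hg1 h.symm)
  set G := F ⧸ N.toSubgroup with hG
  haveI : Finite G := Subgroup.quotient_finite_of_isOpen _ N.isOpen
  haveI : DiscreteTopology G := QuotientGroup.discreteTopology N.isOpen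
  set π : F →* G := QuotientGroup.mk' N.toSubgroup with hπdef
  have hπcont : Continuous π := continuous_quot_mk
  have hπg : π g ≠ 1 := by
    intro h1
    have h2 : g ∈ N.toSubgroup := by
      rw [← QuotientGroup.ker_mk' N.toSubgroup, MonoidHom.mem_ker]; exact h1
    exact hN h2 rfl
  set d := orderOf (π x) with hd
  haveI : NeZero d := ⟨(orderOf_pos (π x)).ne'⟩
  letI : TopologicalSpace (Multiplicative (ZMod d)) := ⊥
  haveI : DiscreteTopology (Multiplicative (ZMod d)) := ⟨rfl⟩
  obtain ⟨χ, ⟨χcont, χspec⟩, -⟩ := extendAux hF (G × Multiplicative (ZMod d))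
    (fun b => (π b, if (b : F) = x then Multiplicative.ofAdd (1 : ZMod d) else 1))
  have hχx : χ x = (π x, Multiplicative.ofAdd (1 : ZMod d)) := by
    have h3 := χspec ⟨x, hx⟩
    simpa using h3
  have hχy : χ y = (π y, 1) := by
    have h3 := χspec ⟨y, hy⟩
    have h4 : (y = x) = False := eq_false fun h => hxy h.symm
    simpa [h4] using h3
  have hfst : ∀ w : F, (χ w).1 = π w := by
    obtain ⟨ρ, -, hρu⟩ := extendAux hF G (fun b => π b)
    have h1 : (MonoidHom.fst G (Multiplicative (ZMod d))).comp χ = ρ := by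
      refine hρu _ ⟨?_, ?_⟩
      · exact continuous_fst.comp χcont
      · intro b; show (χ b).1 = π b; rw [χspec b]
    have h2 : π = ρ := hρu _ ⟨hπcont, fun b => rfl⟩
    intro w
    exact congrArg (fun q => q w) (h1.trans h2.symm)
  have himg : ∀ z w : F, w ∈ (Subgroup.zpowers z).topologicalClosure →
      χ w ∈ Subgroup.zpowers (χ z) := by
    intro z w hw
    have hw' : w ∈ closure ((Subgroup.zpowers z : Set F)) := hw
    have h1 : χ w ∈ closure (⇑χ '' (Subgroup.zpowers z : Set F)) :=
      image_closure_subset_closure_image χcont ⟨w, hw', rfl⟩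
    rw [IsClosed.closure_eq (isClosed_discrete _)] at h1
    obtain ⟨a, ha, hae⟩ := h1
    obtain ⟨k, hk⟩ := ha
    exact ⟨k, by rw [← hae, ← hk, map_zpow]⟩
  obtain ⟨j, hj⟩ := himg x g hgx
  rw [hχx] at hj
  obtain ⟨i, hi⟩ := himg y g hgy
  rw [hχy] at hi
  have hsnd : (χ g).2 = 1 := by
    have h1 := congrArg (MonoidHom.snd G (Multiplicative (ZMod d))) hi
    rw [map_zpow] at h1
    simpa using h1.symm
  have h2 : (π x) ^ j = π g := by
    have h1 := congrArg (MonoidHom.fst G (Multiplicative (ZMod d))) hj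
    rw [map_zpow] at h1
    simpa [hfst g] using h1
  have h1 : (Multiplicative.ofAdd (1 : ZMod d)) ^ j = 1 := by
    have h0 := congrArg (MonoidHom.snd G (Multiplicative (ZMod d))) hj
    rw [map_zpow] at h0
    simpa [hsnd] using h0
  have h3 : ((j : ℤ) : ZMod d) = 0 := by
    have h0 := congrArg Multiplicative.toAdd h1
    simpa using h0
  have h4 : (d : ℤ) ∣ j := (ZMod.intCast_zmod_eq_zero_iff_dvd j d).mp h3
  have h5 : (π x) ^ j = 1 := orderOf_dvd_iff_zpow_eq_one.mp h4
  exact hπg (by rw [← h2, h5])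

end Main2

/-- Herfort–Ribes: in a free profinite group, the centralizer of a positive power
`x^m` of a basis element `x` is the closure of the cyclic subgroup generated by `x`;
consequently the centralizers of `x^m` and `y^n` for distinct basis elements `x ≠ y`
intersect trivially. -/
theorem centralizer_of_basis_power
    (F : Type) [Group F] [TopologicalSpace F] [IsTopologicalGroup F]
    [CompactSpace F] [T2Space F] [TotallyDisconnectedSpace F]
    (B : Set F) (hF : IsFreeProfiniteOn F B)
    (x y : F) (hx : x ∈ B) (hy : y ∈ B) (hxy : x ≠ y)
    (m n : ℕ) (hm : 0 < m) (hn : 0 < n) :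
    Subgroup.centralizer {x ^ m} = (Subgroup.zpowers x).topologicalClosure ∧
    Subgroup.centralizer {x ^ m} ⊓ Subgroup.centralizer {y ^ n} = ⊥ := by
  have h1 := centralizer_eq_closure hF hx hm
  have h2 := centralizer_eq_closure hF hy hn
  refine ⟨h1, ?_⟩
  rw [h1, h2]
  exact closure_inter hF hx hy hxy
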